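/- arXiv:2002.12329 — 3 statements merged into one kernel-verified Lean document; each statement's English description precedes it below -/
import Mathlib

section
/- Let A be a Banach DGLA over ℝ, let e ∈ A_0, and let x : ℝ → A_{−1} be a differentiable curve satisfying x'(t) = ∂e − [e, x(t)] for all t ∈ ℝ. Then the curvature curve f(t) := ∂x(t) + (1/2)[x(t), x(t)] ∈ A_{−2} is differentiable and satisfies the linear equation f'(t) = −[e, f(t)] for all t ∈ ℝ. -/
/-!
Along the flow `x' = ∂e − [e, x]` the curvature changes by `κ' = ∂x' + [x, x']`, since the
bracket is symmetric on `A₋₁`. Expanding with the Leibniz rule and `∂∂e = 0`, the terms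
`[∂e, x]` and `[x, ∂e]` cancel, and `[x, [e, x]] = ½[e, [x, x]]` because `ad_e` is a degree-zero
derivation (graded Jacobi). What is left is `−[e, ∂x] − ½[e, [x, x]] = −[e, κ(x)]`.
-/

/-- A Banach DGLA over `ℝ`: a differential graded Lie algebra whose underlying space is a
Banach space, each graded piece `Aₙ` a closed subspace, with a continuous bilinear bracket
respecting the grading (with graded antisymmetry and graded Jacobi identity) and a bounded
differential `∂` of degree `-1` with `∂ ∘ ∂ = 0` satisfying the graded Leibniz rule. -/
class BanachDGLA (A : Type*) [NormedAddCommGroup A] [NormedSpace ℝ A] [CompleteSpace A] where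
  bracket : A →L[ℝ] A →L[ℝ] A
  grading : ℤ → Submodule ℝ A
  closed_grading : ∀ n, IsClosed (grading n : Set A)
  isInternal : DirectSum.IsInternal grading
  bracket_mem : ∀ (m n : ℤ) (a b : A), a ∈ grading m → b ∈ grading n →
    bracket a b ∈ grading (m + n)
  bracket_antisymm : ∀ (m n : ℤ) (a b : A), a ∈ grading m → b ∈ grading n →
    bracket b a = -(((-1 : ℝ) ^ (m * n)) • bracket a b)
  jacobi : ∀ (l m n : ℤ) (a b c : A), a ∈ grading l → b ∈ grading m → c ∈ grading n →
    ((-1 : ℝ) ^ (l * m)) • bracket (bracket b c) a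
      + ((-1 : ℝ) ^ (m * n)) • bracket (bracket c a) b
      + ((-1 : ℝ) ^ (n * l)) • bracket (bracket a b) c = 0
  d : A →L[ℝ] A
  d_mem : ∀ (n : ℤ) (a : A), a ∈ grading n → d a ∈ grading (n - 1)
  d_sq : ∀ a : A, d (d a) = 0
  leibniz : ∀ (m : ℤ) (a b : A), a ∈ grading m →
    d (bracket a b) = bracket (d a) b + ((-1 : ℝ) ^ m) • bracket a (d b)

namespace BanachDGLA

variable {A : Type*} [NormedAddCommGroup A] [NormedSpace ℝ A] [CompleteSpace A] [BanachDGLA A]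

/-- The differential `∂` of the Banach DGLA. -/
noncomputable def D : A →L[ℝ] A := BanachDGLA.d

/-- The bracket `[x, y]` of the Banach DGLA. -/
noncomputable def br (x y : A) : A := BanachDGLA.bracket x y

/-- The `n`-th graded piece `Aₙ`. -/
noncomputable def gr (n : ℤ) : Submodule ℝ A := BanachDGLA.grading n

/-- The adjoint operator `ad_x = [x, ·]`, a bounded operator. -/
noncomputable def ad (x : A) : A →L[ℝ] A := BanachDGLA.bracket x

/-- The curvature `κ(a) = ∂a + (1/2)[a,a]`. -/
noncomputable def curv (a : A) : A := D a + (2⁻¹ : ℝ) • br a a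

end BanachDGLA

namespace BanachDGLA

variable {A : Type*} [NormedAddCommGroup A] [NormedSpace ℝ A] [CompleteSpace A] [BanachDGLA A]

theorem br_mem {m n : ℤ} {a b : A} (ha : a ∈ gr m) (hb : b ∈ gr n) : br a b ∈ gr (m + n) :=
  bracket_mem m n a b ha hb

theorem D_mem {n : ℤ} {a : A} (ha : a ∈ gr n) : D a ∈ gr (n - 1) :=
  d_mem n a ha

theorem D_D (a : A) : D (D a) = 0 :=
  d_sq a

theorem D_br_of_mem_zero {e : A} (he : e ∈ gr 0) (a : A) :
    D (br e a) = br (D e) a + br e (D a) := by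
  simpa [D, br] using leibniz 0 e a he

theorem br_comm_of_mem_neg_one {a b : A} (ha : a ∈ gr (-1)) (hb : b ∈ gr (-1)) :
    br b a = br a b := by
  simpa [br] using bracket_antisymm (-1) (-1) a b ha hb

theorem br_swap_of_mem_zero {e a : A} {n : ℤ} (he : e ∈ gr 0) (ha : a ∈ gr n) :
    br a e = -br e a := by
  simpa [br] using bracket_antisymm 0 n e a he ha

theorem br_br_of_mem_zero {e a b : A} {m n : ℤ} (he : e ∈ gr 0) (ha : a ∈ gr m)
    (hb : b ∈ gr n) : br e (br a b) = br (br e a) b + br a (br e b) := by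
  have hjacobi := jacobi 0 m n e a b he ha hb
  have hab : br (br a b) e = -br e (br a b) := br_swap_of_mem_zero he (br_mem ha hb)
  have hbe : br b e = -br e b := br_swap_of_mem_zero he hb
  have hebn : br e b ∈ gr n := by simpa using br_mem he hb
  have heb : br (br e b) a = -((-1 : ℝ) ^ (m * n) • br a (br e b)) := by
    simpa [br] using bracket_antisymm m n a (br e b) ha hebn
  have hsign : (-1 : ℝ) ^ (m * n) * (-1) ^ (m * n) = 1 := by
    rw [← mul_zpow]; norm_num
  simp only [zero_mul, mul_zero, zpow_zero, one_smul] at hjacobi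
  change br (br a b) e + (-1 : ℝ) ^ (m * n) • br (br b e) a + br (br e a) b = 0 at hjacobi
  rw [hab, hbe, show br (-br e b) a = -br (br e b) a by simp [br], heb, neg_neg, smul_smul,
    hsign, one_smul] at hjacobi
  linear_combination (norm := abel) -hjacobi

theorem br_br_self_of_mem_zero {e a : A} (he : e ∈ gr 0) (ha : a ∈ gr (-1)) :
    br a (br e a) = (2⁻¹ : ℝ) • br e (br a a) := by
  have hea : br e a ∈ gr (-1) := by simpa using br_mem he ha
  rw [br_br_of_mem_zero he ha ha, br_comm_of_mem_neg_one hea ha, ← two_smul ℝ, smul_smul]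
  norm_num

theorem hasDerivAt_curv_comp {x : ℝ → A} {v : A} {t : ℝ} (hx : HasDerivAt x v t) :
    HasDerivAt (fun s => curv (x s)) (D v + (2⁻¹ : ℝ) • (br v (x t) + br (x t) v)) t := by
  have hD : HasDerivAt (fun s => D (x s)) (D v) t := D.hasFDerivAt.comp_hasDerivAt t hx
  have hbr : HasDerivAt (fun s => br (x s) (x s)) (br v (x t) + br (x t) v) t := by
    have := (bracket.isBoundedBilinearMap.hasFDerivAt (x t, x t)).comp_hasDerivAt t
      (hx.prodMk hx)
    simpa [br, IsBoundedBilinearMap.deriv_apply, add_comm, Function.comp_def] using this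
  simpa [curv, Pi.add_def, Pi.smul_def] using hD.add (hbr.const_smul (2⁻¹ : ℝ))

theorem hasDerivAt_curv_comp_of_mem_neg_one {x : ℝ → A} {v : A} {t : ℝ}
    (hx : HasDerivAt x v t) (hxt : x t ∈ gr (-1)) (hv : v ∈ gr (-1)) :
    HasDerivAt (fun s => curv (x s)) (D v + br (x t) v) t := by
  convert hasDerivAt_curv_comp hx using 1
  rw [br_comm_of_mem_neg_one hxt hv, ← two_smul ℝ (br (x t) v), smul_smul]
  norm_num

theorem D_add_br_flow_eq {e a : A} (he : e ∈ gr 0) (ha : a ∈ gr (-1)) :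
    D (D e - br e a) + br a (D e - br e a) = -br e (curv a) := by
  have hDe : D e ∈ gr (-1) := by simpa using D_mem he
  have hbr_sub : br a (D e - br e a) = br a (D e) - br a (br e a) := by simp [br]
  have hbr_curv : br e (curv a) = br e (D a) + (2⁻¹ : ℝ) • br e (br a a) := by
    simp [curv, br]
  rw [map_sub, D_D, D_br_of_mem_zero he, hbr_sub, br_br_self_of_mem_zero he ha,
    br_comm_of_mem_neg_one ha hDe, hbr_curv]
  abel

end BanachDGLA

open BanachDGLA in
/-- in a Banach DGLA over `ℝ`, if `e ∈ A₀` and `x : ℝ → A₋₁` is a differentiable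
curve satisfying the flow equation `x'(t) = ∂e − [e, x(t)]`, then the curvature curve
`f(t) := ∂x(t) + (1/2)[x(t), x(t)] ∈ A₋₂` is differentiable and satisfies the linear
equation `f'(t) = −[e, f(t)]`. -/
theorem curvature_flow_ode {A : Type*} [NormedAddCommGroup A] [NormedSpace ℝ A]
    [CompleteSpace A] [BanachDGLA A]
    (e : A) (he : e ∈ gr 0) (x : ℝ → A) (hx : ∀ t, x t ∈ gr (-1))
    (hflow : ∀ t : ℝ, HasDerivAt x (D e - br e (x t)) t) :
    ∀ t : ℝ, HasDerivAt (fun s => curv (x s)) (-br e (curv (x t))) t := by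
  intro t
  have hvelocity : D e - br e (x t) ∈ gr (-1) :=
    Submodule.sub_mem _ (by simpa using D_mem he) (by simpa using br_mem he (hx t))
  rw [← D_add_br_flow_eq he (hx t)]
  exact hasDerivAt_curv_comp_of_mem_neg_one (hflow t) (hx t) hvelocity
end

section
/- Let A be a Banach DGLA over ℝ, e ∈ A_0 and a ∈ A_{−1}. Define x(t) := exp(−t·ad_e)(a) + Σ_{n≥0} (−1)^n t^{n+1} (ad_e)^n(∂e)/(n+1)! (a convergent series since ad_e is a bounded operator). Then x(0) = a, the curve x is differentiable, and x'(t) = ∂e − [e, x(t)] for all t ∈ ℝ; that is, the explicit formula u_{te}(a) solves the flow equation of e with initial condition a. -/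
/-!
For a bounded operator `L` and a vector `b`, the affine equation `y' = b - L y` becomes linear
on `E × ℝ`: with `M (y, s) = (s • b - L y, 0)` one has
`Mⁿ⁺¹ (y, s) = ((-1)ⁿ⁺¹ Lⁿ⁺¹ y + (-1)ⁿ s Lⁿ b, 0)`, so the exponential series of `t • M` at
`(a, 1)` is, term by term, the sum of the two series defining `x t`; that is,
`exp (t • M) (a, 1) = (x t, 1)`. Differentiating, `x' t` is the first component of
`M (x t, 1) = (b - L (x t), 0)`. Here `L = ad e` and `b = ∂e`.
-/

open NormedSpace

section AffineFlow

variable {E : Type*} [NormedAddCommGroup E] [NormedSpace ℝ E]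

/-- The affine vector field `y ↦ b - L y` on `E`, made linear on `E × ℝ` by letting the
second coordinate carry the coefficient of `b`. -/
noncomputable def affineHomogenization (L : E →L[ℝ] E) (b : E) : E × ℝ →L[ℝ] E × ℝ :=
  ((ContinuousLinearMap.snd ℝ E ℝ).smulRight b - L.comp (ContinuousLinearMap.fst ℝ E ℝ)).prod 0

@[simp]
theorem affineHomogenization_apply (L : E →L[ℝ] E) (b : E) (p : E × ℝ) :
    affineHomogenization L b p = (p.2 • b - L p.1, 0) := rfl

theorem affineHomogenization_pow_succ_apply (L : E →L[ℝ] E) (b : E) (n : ℕ) (p : E × ℝ) :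
    (affineHomogenization L b ^ (n + 1)) p
      = ((-1 : ℝ) ^ (n + 1) • (L ^ (n + 1)) p.1 + ((-1 : ℝ) ^ n * p.2) • (L ^ n) b, 0) := by
  induction n with
  | zero => simp [sub_eq_neg_add]
  | succ n ih =>
    rw [pow_succ', mul_apply_eq_comp, ih, affineHomogenization_apply,
      pow_succ' L (n + 1), pow_succ' L n]
    simp only [mul_apply_eq_comp, map_add, map_smul, zero_smul, zero_sub, pow_succ]
    ext
    · simp only [neg_add_rev]
      module
    · rfl

noncomputable def affineFlow (L : E →L[ℝ] E) (b a : E) (t : ℝ) : E :=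
  (∑' n : ℕ, ((-t) ^ n / n.factorial) • (L ^ n) a)
    + ∑' n : ℕ, ((-1 : ℝ) ^ n * t ^ (n + 1) / (n + 1).factorial) • (L ^ n) b

variable [CompleteSpace E]

theorem hasSum_exp_smul_apply (T : E →L[ℝ] E) (t : ℝ) (p : E) :
    HasSum (fun n : ℕ => (t ^ n / n.factorial) • (T ^ n) p) (exp (t • T) p) := by
  convert (exp_series_hasSum_exp' (𝕂 := ℝ) (t • T)).mapL (ContinuousLinearMap.apply ℝ E p)
    using 1
  · ext n
    simp [smul_pow, smul_smul, div_eq_inv_mul]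
  · rfl

theorem hasDerivAt_exp_smul_apply (T : E →L[ℝ] E) (p : E) (t : ℝ) :
    HasDerivAt (fun s : ℝ => exp (s • T) p) (T (exp (t • T) p)) t := by
  simpa using (hasDerivAt_exp_smul_const' (𝕂 := ℝ) T t).clm_apply (hasDerivAt_const t p)

theorem exp_smul_affineHomogenization_apply (L : E →L[ℝ] E) (b a : E) (t : ℝ) :
    exp (t • affineHomogenization L b) (a, 1) = (affineFlow L b a t, 1) := by
  have hterm : ∀ n : ℕ,
      (t ^ (n + 1) / (n + 1).factorial) • (affineHomogenization L b ^ (n + 1)) (a, 1)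
        = (((-t) ^ (n + 1) / (n + 1).factorial) • (L ^ (n + 1)) a
          + ((-1 : ℝ) ^ n * t ^ (n + 1) / (n + 1).factorial) • (L ^ n) b, 0) := by
    intro n
    rw [affineHomogenization_pow_succ_apply, Prod.smul_mk, smul_zero, neg_pow]
    congr 1
    module
  have hshift := (hasSum_nat_add_iff' 1).2 (hasSum_exp_smul_apply (affineHomogenization L b) t (a, 1))
  simp only [hterm, Finset.range_one, Finset.sum_singleton, pow_zero, Nat.factorial_zero,
    Nat.cast_one, div_one, one_smul, one_apply_eq_self] at hshift
  have hexp := hasSum_exp_smul_apply L (-t) a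
  have hseries_b := (hshift.mapL (ContinuousLinearMap.fst ℝ E ℝ)).sub ((hasSum_nat_add_iff' 1).2 hexp)
  simp only [ContinuousLinearMap.coe_fst', add_sub_cancel_left] at hseries_b
  have hsnd : (exp (t • affineHomogenization L b) (a, 1)).2 = 1 := by
    simpa [sub_eq_zero] using (hshift.mapL (ContinuousLinearMap.snd ℝ E ℝ)).unique hasSum_zero
  rw [affineFlow, hexp.tsum_eq, hseries_b.tsum_eq, neg_smul]
  refine Prod.ext ?_ hsnd
  simp

theorem affineFlow_zero (L : E →L[ℝ] E) (b a : E) : affineFlow L b a 0 = a := by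
  simpa using (exp_smul_affineHomogenization_apply L b a 0).symm

theorem hasDerivAt_affineFlow (L : E →L[ℝ] E) (b a : E) (t : ℝ) :
    HasDerivAt (affineFlow L b a) (b - L (affineFlow L b a t)) t := by
  have h := hasDerivAt_exp_smul_apply (affineHomogenization L b) (a, 1) t
  simp only [exp_smul_affineHomogenization_apply, affineHomogenization_apply, one_smul] at h
  exact (ContinuousLinearMap.fst ℝ E ℝ).hasFDerivAt.comp_hasDerivAt t h

end AffineFlow

open BanachDGLA in
theorem explicit_flow_solves_ode_general {A : Type*} [NormedAddCommGroup A] [NormedSpace ℝ A]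
    [CompleteSpace A] [BanachDGLA A]
    (e a : A)
    (x : ℝ → A)
    (hxdef : ∀ t : ℝ, x t =
      (∑' n : ℕ, ((-t) ^ n / (Nat.factorial n : ℝ)) • ((ad e ^ n) a))
      + ∑' n : ℕ, (((-1 : ℝ) ^ n * t ^ (n + 1)) / (Nat.factorial (n + 1) : ℝ)) •
          ((ad e ^ n) (D e))) :
    x 0 = a ∧ ∀ t : ℝ, HasDerivAt x (D e - br e (x t)) t := by
  obtain rfl : x = affineFlow (ad e) (D e) a := funext hxdef
  exact ⟨affineFlow_zero _ _ _, hasDerivAt_affineFlow _ _ _⟩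

open BanachDGLA in
/-- explicit solution of the flow equation. In a Banach DGLA over `ℝ`, for
`e ∈ A₀` and `a ∈ A₋₁`, the curve
`x(t) := exp(−t·ad_e)(a) + Σ_{n≥0} (−1)ⁿ t^{n+1} (ad_e)ⁿ(∂e)/(n+1)!`
(a convergent series since `ad_e` is a bounded operator) satisfies `x(0) = a`, is
differentiable, and solves `x'(t) = ∂e − [e, x(t)]` for all `t ∈ ℝ`; i.e. the explicit
formula `u_{te}(a)` solves the flow equation of `e` with initial condition `a`. -/
theorem explicit_flow_solves_ode {A : Type*} [NormedAddCommGroup A] [NormedSpace ℝ A]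
    [CompleteSpace A] [BanachDGLA A]
    (e a : A) (he : e ∈ gr 0) (ha : a ∈ gr (-1))
    (x : ℝ → A)
    (hxdef : ∀ t : ℝ, x t =
      (∑' n : ℕ, ((-t) ^ n / (Nat.factorial n : ℝ)) • ((ad e ^ n) a))
      + ∑' n : ℕ, (((-1 : ℝ) ^ n * t ^ (n + 1)) / (Nat.factorial (n + 1) : ℝ)) •
          ((ad e ^ n) (D e))) :
    x 0 = a ∧ ∀ t : ℝ, HasDerivAt x (D e - br e (x t)) t :=
  explicit_flow_solves_ode_general e a x hxdef
end

section
/- One-parameter group property of flows: let A be a differential graded Lie algebra over a field k of characteristic zero and let e ∈ A_0 have nilpotent adjoint action ad_e. Then for every a ∈ A_{−1} and all s, t ∈ k, u_{se}(u_{te}(a)) = u_{(s+t)e}(a); in particular u_{−e}(u_e(a)) = a and u_0(a) = a. -/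
/-- A differential graded Lie algebra (DGLA) over a field `k` of characteristic zero:
a `ℤ`-graded `k`-vector space `A = ⊕ₙ Aₙ` with a bilinear bracket respecting the grading,
graded antisymmetry, the graded Jacobi identity, and a differential `∂` of degree `-1`
with `∂ ∘ ∂ = 0` satisfying the graded Leibniz rule. -/
class DGLA (k : Type*) (A : Type*) [Field k] [CharZero k]
    [AddCommGroup A] [Module k A] where
  bracket : A →ₗ[k] A →ₗ[k] A
  grading : ℤ → Submodule k A
  isInternal : DirectSum.IsInternal grading
  bracket_mem : ∀ (m n : ℤ) (a b : A), a ∈ grading m → b ∈ grading n →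
    bracket a b ∈ grading (m + n)
  bracket_antisymm : ∀ (m n : ℤ) (a b : A), a ∈ grading m → b ∈ grading n →
    bracket b a = -(((-1 : k) ^ (m * n)) • bracket a b)
  jacobi : ∀ (l m n : ℤ) (a b c : A), a ∈ grading l → b ∈ grading m → c ∈ grading n →
    ((-1 : k) ^ (l * m)) • bracket (bracket b c) a
      + ((-1 : k) ^ (m * n)) • bracket (bracket c a) b
      + ((-1 : k) ^ (n * l)) • bracket (bracket a b) c = 0
  d : A →ₗ[k] A
  d_mem : ∀ (n : ℤ) (a : A), a ∈ grading n → d a ∈ grading (n - 1)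
  d_sq : ∀ a : A, d (d a) = 0
  leibniz : ∀ (m : ℤ) (a b : A), a ∈ grading m →
    d (bracket a b) = bracket (d a) b + ((-1 : k) ^ m) • bracket a (d b)

namespace DGLA

variable (k : Type*) {A : Type*} [Field k] [CharZero k] [AddCommGroup A] [Module k A]
  [DGLA k A]

/-- The differential `∂` of the DGLA. -/
noncomputable def D : A →ₗ[k] A := DGLA.d (k := k) (A := A)

/-- The bracket `[x, y]` of the DGLA. -/
noncomputable def br (x y : A) : A := DGLA.bracket (k := k) (A := A) x y

/-- The `n`-th graded piece `Aₙ`. -/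
noncomputable def gr (n : ℤ) : Submodule k A := DGLA.grading (k := k) (A := A) n

/-- The adjoint operator `ad_x = [x, ·]`. -/
noncomputable def ad (x : A) : Module.End k A := DGLA.bracket (k := k) (A := A) x

/-- A *point*: an element of `A₋₁` satisfying the Maurer–Cartan equation
`∂a + (1/2)[a,a] = 0`. -/
def IsPoint (a : A) : Prop :=
  a ∈ gr k (-1) ∧ D k a + (2⁻¹ : k) • br k a a = 0

/-- The twisted differential `∂_a = ∂ + ad_a`. -/
noncomputable def twistD (a : A) : Module.End k A := D k + ad k a

/-- The curvature `κ(a) = ∂a + (1/2)[a,a]`. -/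
noncomputable def curv (a : A) : A := D k a + (2⁻¹ : k) • br k a a

/-- The truncated operator power series `Σ_{n<N} (−1)ⁿ fⁿ/n!`; when `f^N = 0` this is the
exponential `exp(−f)` (a finite sum by nilpotency). -/
noncomputable def expNeg (f : Module.End k A) (N : ℕ) : Module.End k A :=
  ∑ n ∈ Finset.range N, ((-1 : k) ^ n * (Nat.factorial n : k)⁻¹) • f ^ n

/-- The truncated operator power series `F(f) = Σ_{n<N} (−1)ⁿ fⁿ/(n+1)!`; when `f^N = 0`
this is the power series of `(1 − e^{−T})/T` evaluated at `f` (a finite sum by nilpotency). -/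
noncomputable def Fser (f : Module.End k A) (N : ℕ) : Module.End k A :=
  ∑ n ∈ Finset.range N, ((-1 : k) ^ n * (Nat.factorial (n + 1) : k)⁻¹) • f ^ n

/-- The time-one flow `u_e(a) := exp(−ad_e)(a) + F(ad_e)(∂e)` of `e ∈ A₀` applied to
`a ∈ A₋₁`, truncated at order `N` (exact when `(ad_e)^N = 0`). -/
noncomputable def flow (e : A) (N : ℕ) (a : A) : A :=
  expNeg k (ad k e) N a + Fser k (ad k e) N (D k e)

end DGLA

/-! Both parts of `u_{ce}` are evaluations at the nilpotent `ad_e` of power series: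
`u_{ce}(a) = E_c(ad_e) a + c F_c(ad_e) ∂e` with `E_c = e^{-cX}` and `F_c = (1 - e^{-cX}) / (cX)`.
Evaluation at a nilpotent element is an algebra homomorphism on `k⟦X⟧`, so the group law reduces
to the identities `E_s E_t = E_{s+t}` and `t E_s F_t + s F_s = (s + t) F_{s+t}` of power series;
after multiplication by `X` the second one becomes the first. -/

namespace PowerSeries

section EvalOfPowEqZero

variable {R B : Type*} [CommRing R] [Ring B] [Algebra R B] {x : B} {N : ℕ}

theorem aeval_trunc_coe_of_pow_eq_zero (hx : x ^ N = 0) (p : Polynomial R) :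
    Polynomial.aeval x (trunc N (p : R⟦X⟧)) = Polynomial.aeval x p := by
  obtain ⟨q, hq⟩ : Polynomial.X ^ N ∣ p - trunc N (p : R⟦X⟧) := by
    refine Polynomial.X_pow_dvd_iff.mpr fun d hd => ?_
    rw [Polynomial.coeff_sub, coeff_trunc, if_pos hd, Polynomial.coeff_coe, sub_self]
  rw [eq_comm, ← sub_eq_zero, ← map_sub, hq, map_mul, map_pow, Polynomial.aeval_X, hx, zero_mul]

noncomputable def aevalOfPowEqZero (hx : x ^ N = 0) : R⟦X⟧ →ₐ[R] B :=
  AlgHom.ofLinearMap ((Polynomial.aeval x).toLinearMap ∘ₗ trunc N)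
    (by
      rcases N with _ | n
      · exact (subsingleton_of_zero_eq_one (by simpa using hx.symm)).elim _ _
      · simp [trunc_one])
    (fun φ ψ => by
      simp only [LinearMap.comp_apply, AlgHom.toLinearMap_apply, ← trunc_trunc_mul_trunc,
        ← Polynomial.coe_mul, aeval_trunc_coe_of_pow_eq_zero hx, map_mul])

theorem aevalOfPowEqZero_apply (hx : x ^ N = 0) (φ : R⟦X⟧) :
    aevalOfPowEqZero hx φ = ∑ n ∈ Finset.range N, coeff n φ • x ^ n := by
  change Polynomial.aeval x (trunc N φ) = _
  rw [Polynomial.aeval_def, eval₂_trunc_eq_sum_range]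
  simp only [Algebra.smul_def]

end EvalOfPowEqZero

section ExpSubOneDivX

variable (k : Type*) [Field k]

noncomputable def expSubOneDivX : k⟦X⟧ :=
  mk fun n => ((n + 1).factorial : k)⁻¹

variable [CharZero k]

theorem X_mul_expSubOneDivX : X * expSubOneDivX k = exp k - 1 := by
  ext (_ | n)
  · simp
  · rw [coeff_succ_X_mul]
    simp [expSubOneDivX, coeff_exp]

theorem smul_rescale_expSubOneDivX_add (s t : k) :
    t • (rescale (-s) (exp k) * rescale (-t) (expSubOneDivX k))
        + s • rescale (-s) (expSubOneDivX k)
      = (s + t) • rescale (-(s + t)) (expSubOneDivX k) := by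
  have key (c : k) : X * (C c * rescale (-c) (expSubOneDivX k)) = 1 - rescale (-c) (exp k) := by
    have := congrArg (rescale (-c)) (X_mul_expSubOneDivX k)
    rw [map_mul, rescale_X, map_sub, map_one, map_neg] at this
    linear_combination -this
  have hexp := exp_mul_exp_eq_exp_add (-s) (-t)
  rw [← neg_add] at hexp
  simp only [smul_eq_C_mul]
  refine mul_left_cancel₀ X_ne_zero ?_
  linear_combination rescale (-s) (exp k) * key t + key s - key (s + t) - hexp

end ExpSubOneDivX

end PowerSeries

namespace DGLA

open PowerSeries

variable {k A : Type*} [Field k] [CharZero k] [AddCommGroup A] [Module k A]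

theorem expNeg_smul_eq_aevalOfPowEqZero {f : Module.End k A} {N : ℕ} (hf : f ^ N = 0) (c : k) :
    expNeg k (c • f) N = aevalOfPowEqZero hf (rescale (-c) (exp k)) := by
  rw [aevalOfPowEqZero_apply, expNeg]
  refine Finset.sum_congr rfl fun n _ => ?_
  rw [smul_pow, smul_smul, coeff_rescale, coeff_exp]
  simp only [map_div₀, map_one, map_natCast, neg_pow c]
  ring_nf

theorem Fser_smul_eq_aevalOfPowEqZero {f : Module.End k A} {N : ℕ} (hf : f ^ N = 0) (c : k) :
    Fser k (c • f) N = aevalOfPowEqZero hf (rescale (-c) (expSubOneDivX k)) := by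
  rw [aevalOfPowEqZero_apply, Fser]
  refine Finset.sum_congr rfl fun n _ => ?_
  rw [smul_pow, smul_smul, coeff_rescale, expSubOneDivX, coeff_mk, neg_pow c]
  ring_nf

variable [DGLA k A]

theorem flow_smul_eq {e : A} {N : ℕ} (hN : ad k e ^ N = 0) (c : k) (a : A) :
    flow k (c • e) N a = aevalOfPowEqZero hN (rescale (-c) (exp k)) a
      + aevalOfPowEqZero hN (c • rescale (-c) (expSubOneDivX k)) (D k e) := by
  have had : ad k (c • e) = c • ad k e := map_smul (DGLA.bracket (k := k)) c e
  rw [flow, had, expNeg_smul_eq_aevalOfPowEqZero hN, Fser_smul_eq_aevalOfPowEqZero hN]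
  simp only [map_smul, LinearMap.smul_apply]

theorem flow_smul_flow_smul {e : A} {N : ℕ} (hN : ad k e ^ N = 0) (s t : k) (a : A) :
    flow k (s • e) N (flow k (t • e) N a) = flow k ((s + t) • e) N a := by
  rw [flow_smul_eq hN, flow_smul_eq hN, flow_smul_eq hN, neg_add, ← exp_mul_exp_eq_exp_add,
    ← neg_add, ← smul_rescale_expSubOneDivX_add]
  simp only [map_add, map_mul, map_smul, Module.End.mul_apply, LinearMap.smul_apply,
    LinearMap.add_apply]
  abel

theorem flow_zero_smul {e : A} {N : ℕ} (hN : ad k e ^ N = 0) (a : A) :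
    flow k ((0 : k) • e) N a = a := by
  rw [flow_smul_eq hN, neg_zero, rescale_zero, zero_smul, map_zero, LinearMap.zero_apply,
    add_zero, RingHom.comp_apply, constantCoeff_exp, map_one, map_one, Module.End.one_apply]

end DGLA

open DGLA in
theorem flow_add_general {k A : Type*} [Field k] [CharZero k]
    [AddCommGroup A] [Module k A] [DGLA k A]
    (e : A) (N : ℕ) (hN : ad k e ^ N = 0) :
    ∀ a ∈ gr k (-1), ∀ s t : k,
      (flow k (s • e) N (flow k (t • e) N a) = flow k ((s + t) • e) N a) ∧
      flow k (-e) N (flow k e N a) = a ∧ flow k ((0 : k) • e) N a = a := by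
  intro a _ s t
  refine ⟨flow_smul_flow_smul hN s t a, ?_, flow_zero_smul hN a⟩
  have h := flow_smul_flow_smul hN (-1) 1 a
  rw [neg_one_smul, one_smul, neg_add_cancel] at h
  exact h.trans (flow_zero_smul hN a)

open DGLA in
/-- one-parameter group property of flows. In a DGLA over a field `k` of
characteristic zero, if `e ∈ A₀` has nilpotent adjoint action (`(ad_e)^N = 0`), then for
every `a ∈ A₋₁` and all `s, t ∈ k`, `u_{se}(u_{te}(a)) = u_{(s+t)e}(a)`; in particular
`u_{−e}(u_e(a)) = a` and `u_0(a) = a`. -/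
theorem flow_add {k A : Type*} [Field k] [CharZero k]
    [AddCommGroup A] [Module k A] [DGLA k A]
    (e : A) (he : e ∈ gr k 0) (N : ℕ) (hN : ad k e ^ N = 0) :
    ∀ a ∈ gr k (-1), ∀ s t : k,
      (flow k (s • e) N (flow k (t • e) N a) = flow k ((s + t) • e) N a) ∧
      flow k (-e) N (flow k e N a) = a ∧ flow k ((0 : k) • e) N a = a :=
  flow_add_general e N hN
end
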